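/- For every one-sided MTL formula φ there is a bound k_φ ∈ ℕ such that the constructed 1-ATA A'_φ has width at most k_φ, i.e., every configuration reachable from the initial configuration {(φ_init,0)} of A'_φ by timed and discrete transitions contains at most k_φ active states. -/

import Mathlib

open scoped Classical NNReal

namespace ATAPaper

/-! ## Intervals with natural endpoints (possibly unbounded) -/

inductive NInterval where
  | cc (a b : ℕ)
  | co (a b : ℕ)
  | oc (a b : ℕ)
  | oo (a b : ℕ)
  | ci (a : ℕ)
  | oi (a : ℕ)
deriving DecidableEq

/-- Membership of a nonnegative real in an interval. -/
def NInterval.mem (v : ℝ≥0) : NInterval → Prop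
  | .cc a b => (a : ℝ≥0) ≤ v ∧ v ≤ (b : ℝ≥0)
  | .co a b => (a : ℝ≥0) ≤ v ∧ v < (b : ℝ≥0)
  | .oc a b => (a : ℝ≥0) < v ∧ v ≤ (b : ℝ≥0)
  | .oo a b => (a : ℝ≥0) < v ∧ v < (b : ℝ≥0)
  | .ci a => (a : ℝ≥0) ≤ v
  | .oi a => (a : ℝ≥0) < v

/-- The largest constant appearing in an interval. -/
def NInterval.bound : NInterval → ℕ
  | .cc a b | .co a b | .oc a b | .oo a b => max a b
  | .ci a | .oi a => a

/-! ## Transition formulas `Φ(Q)` with reset `x.φ` and deactivation `x̄.φ` -/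

inductive TF (Q : Type*) where
  | tt
  | ff
  | loc (q : Q)
  | guard (I : NInterval)
  | and (φ ψ : TF Q)
  | or (φ ψ : TF Q)
  | reset (φ : TF Q)
  | deact (φ : TF Q)

/-- A state of a 1-ATA is a location together with a clock value which is
either inactive (`none` = ⊥) or a nonnegative real.  A configuration is a
finite set of states. -/
abbrev Config (Q : Type*) := Finset (Q × Option ℝ≥0)

section BasicDefs

variable {Q A : Type*}

/-- `M ⊨_v φ`. -/
def TF.sat (M : Config Q) : TF Q → Option ℝ≥0 → Prop
  | .tt, _ => True
  | .ff, _ => False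
  | .loc q, v => (q, v) ∈ M
  | .guard I, v => v = none ∨ ∃ r, v = some r ∧ I.mem r
  | .and φ ψ, v => φ.sat M v ∧ ψ.sat M v
  | .or φ ψ, v => φ.sat M v ∨ ψ.sat M v
  | .reset φ, _ => φ.sat M (some 0)
  | .deact φ, _ => φ.sat M none

/-- `M` is a minimal model of `φ` on `v`. -/
def MinModel (M : Config Q) (v : Option ℝ≥0) (φ : TF Q) : Prop :=
  φ.sat M v ∧ ∀ M' ⊂ M, ¬ φ.sat M' v

/-- The disjuncts of a formula (assumed to be in disjunctive normal form). -/
def TF.disjuncts : TF Q → List (TF Q)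
  | .or φ ψ => φ.disjuncts ++ ψ.disjuncts
  | φ => [φ]

/-- The intervals occurring (anywhere) in a transition formula. -/
def TF.guards : TF Q → List NInterval
  | .guard I => [I]
  | .and φ ψ | .or φ ψ => φ.guards ++ ψ.guards
  | .reset φ | .deact φ => φ.guards
  | _ => []

/-! ## One-clock alternating timed automata with deactivation -/

structure OneATA (Q A : Type*) where
  init : Q
  final : Set Q
  delta : Q → A → Option (TF Q)

/-- `C` is one of the disjuncts of `δ(q,a)`. -/
def OneATA.isTarget (𝒜 : OneATA Q A) (q : Q) (a : A) (C : TF Q) : Prop :=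
  ∃ φ, 𝒜.delta q a = some φ ∧ C ∈ φ.disjuncts

/-- Time elapse on a configuration: add `d` to every active value, keep `⊥`. -/
noncomputable def Config.delay (γ : Config Q) (d : ℝ≥0) : Config Q :=
  γ.image (fun s => (s.1, s.2.map (· + d)))

/-- Discrete transition `γ →^{a,C} γ'` where the target `χ` assigns to each
state of `γ` a disjunct of the corresponding transition formula. -/
def OneATA.DStep (𝒜 : OneATA Q A) (γ : Config Q) (a : A)
    (χ : Q × Option ℝ≥0 → TF Q) (γ' : Config Q) : Prop :=
  (∀ s ∈ γ, 𝒜.isTarget s.1 a (χ s)) ∧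
  ∃ Mo : Q × Option ℝ≥0 → Config Q,
    (∀ s ∈ γ, MinModel (Mo s) s.2 (χ s)) ∧ γ' = γ.biUnion Mo

/-- Combined transition `γ →^{d,a,C} γ'`. -/
def OneATA.Step (𝒜 : OneATA Q A) (γ : Config Q) (d : ℝ≥0) (a : A)
    (χ : Q × Option ℝ≥0 → TF Q) (γ' : Config Q) : Prop :=
  𝒜.DStep (γ.delay d) a χ γ'

/-- A configuration is accepting if all its locations are accepting. -/
def OneATA.AcceptingCfg (𝒜 : OneATA Q A) (γ : Config Q) : Prop :=
  ∀ s ∈ γ, s.1 ∈ 𝒜.final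

/-- Accepting runs on (finite) timed words. -/
inductive OneATA.AccRun (𝒜 : OneATA Q A) : Config Q → List (ℝ≥0 × A) → Prop
  | nil {γ} : 𝒜.AcceptingCfg γ → 𝒜.AccRun γ []
  | cons {γ γ' : Config Q} {d : ℝ≥0} {a : A} {w : List (ℝ≥0 × A)}
      (χ : Q × Option ℝ≥0 → TF Q) :
      𝒜.Step γ d a χ γ' → 𝒜.AccRun γ' w → 𝒜.AccRun γ ((d, a) :: w)

/-- The language of a 1-ATA. -/
def OneATA.Lang (𝒜 : OneATA Q A) : Set (List (ℝ≥0 × A)) :=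
  {w | 𝒜.AccRun {(𝒜.init, some 0)} w}

/-- Reachability between configurations by timed and discrete transitions. -/
inductive OneATA.Reach (𝒜 : OneATA Q A) : Config Q → Config Q → Prop
  | refl (γ) : 𝒜.Reach γ γ
  | delay {γ γ'} (d : ℝ≥0) : 𝒜.Reach γ γ' → 𝒜.Reach γ (γ'.delay d)
  | step {γ γ' γ''} (a : A) (χ) : 𝒜.Reach γ γ' → 𝒜.DStep γ' a χ γ'' → 𝒜.Reach γ γ''

/-- The width of a configuration: the number of active states. -/
noncomputable def Config.width (γ : Config Q) : ℕ :=
  (γ.filter (fun s => s.2 ≠ none)).card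

/-- The 1-ATA has width at most `k`. -/
def OneATA.WidthBounded (𝒜 : OneATA Q A) (k : ℕ) : Prop :=
  ∀ γ, 𝒜.Reach {(𝒜.init, some 0)} γ → γ.width ≤ k

/-- All constants appearing in the automaton are at most `M`. -/
def OneATA.BoundedBy (𝒜 : OneATA Q A) (M : ℕ) : Prop :=
  ∀ q a φ, 𝒜.delta q a = some φ → ∀ I ∈ φ.guards, I.bound ≤ M

/-! ## Region equivalence and entailment on configurations -/

/-- `γ ≃_M γ'` via the bijection `h`. -/
def RegionEquivWith (M : ℕ) (γ γ' : Config Q)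
    (h : Q × Option ℝ≥0 → Q × Option ℝ≥0) : Prop :=
  Set.BijOn h ↑γ ↑γ' ∧
  (∀ s ∈ γ, (h s).1 = s.1) ∧
  (∀ s ∈ γ, ((h s).2 = none ↔ s.2 = none)) ∧
  (∀ s ∈ γ, ∀ r r', s.2 = some r → (h s).2 = some r' →
    ((r ≤ (M : ℝ≥0)) ↔ (r' ≤ (M : ℝ≥0))) ∧
    (r ≤ (M : ℝ≥0) →
      (⌊(r : ℝ)⌋ = ⌊(r' : ℝ)⌋ ∧ (Int.fract (r : ℝ) = 0 ↔ Int.fract (r' : ℝ) = 0)))) ∧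
  (∀ s₁ ∈ γ, ∀ s₂ ∈ γ, ∀ r₁ r₂ r₁' r₂',
    s₁.2 = some r₁ → s₂.2 = some r₂ → (h s₁).2 = some r₁' → (h s₂).2 = some r₂' →
    r₁ ≤ (M : ℝ≥0) → r₂ ≤ (M : ℝ≥0) →
    (Int.fract (r₁ : ℝ) ≤ Int.fract (r₂ : ℝ) ↔ Int.fract (r₁' : ℝ) ≤ Int.fract (r₂' : ℝ)))

/-- Region equivalence `γ ≃_M γ'`. -/
def RegionEquiv (M : ℕ) (γ γ' : Config Q) : Prop := ∃ h, RegionEquivWith M γ γ' h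

/-- Configuration entailment `γ ⊨_M γ'` : some subset of `γ'` is region equivalent
to `γ`. -/
def CfgEntails (M : ℕ) (γ γ' : Config Q) : Prop :=
  ∃ γ'' ⊆ γ', RegionEquiv M γ γ''

end BasicDefs


/-! ## MTL (negation normal form) -/

inductive MTL (A : Type*) where
  | atom (a : A)
  | natom (a : A)
  | conj (φ ψ : MTL A)
  | disj (φ ψ : MTL A)
  | next (I : NInterval) (φ : MTL A)
  | untl (I : NInterval) (φ ψ : MTL A)

section MTLDefs

variable {A : Type*}

/-- Accumulated time `Σ_{c=1}^{p} d_c` of the first `p` letters of a timed word. -/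
def twtime (w : List (ℝ≥0 × A)) (p : ℕ) : ℝ≥0 := ((w.take p).map Prod.fst).sum

/-- `(w, i) ⊨ φ` (positions are 0-based). -/
def MTL.holdsAt (w : List (ℝ≥0 × A)) : MTL A → ℕ → Prop
  | .atom a, i => ∃ h : i < w.length, (w.get ⟨i, h⟩).2 = a
  | .natom a, i => ∃ h : i < w.length, (w.get ⟨i, h⟩).2 ≠ a
  | .conj φ ψ, i => φ.holdsAt w i ∧ ψ.holdsAt w i
  | .disj φ ψ, i => φ.holdsAt w i ∨ ψ.holdsAt w i
  | .next I φ, i => ∃ h : i + 1 < w.length, φ.holdsAt w (i + 1) ∧ I.mem (w.get ⟨i + 1, h⟩).1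
  | .untl I φ ψ, i => ∃ k, i ≤ k ∧ k < w.length ∧ ψ.holdsAt w k ∧
      I.mem (twtime w (k + 1) - twtime w (i + 1)) ∧
      ∀ j, i ≤ j → j < k → φ.holdsAt w j

/-- The language of an MTL formula (`w ⊨ φ` iff `φ` holds at the first position). -/
def MTL.Lang (φ : MTL A) : Set (List (ℝ≥0 × A)) := {w | φ.holdsAt w 0}

/-- Pure LTL formulas: every interval is `[0, ∞)`. -/
def MTL.isPure : MTL A → Bool
  | .atom _ | .natom _ => true
  | .conj φ ψ | .disj φ ψ => φ.isPure && ψ.isPure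
  | .next I φ => decide (I = NInterval.ci 0) && φ.isPure
  | .untl I φ ψ => decide (I = NInterval.ci 0) && φ.isPure && ψ.isPure

/-- The subformulas of an MTL formula. -/
def MTL.subfs : MTL A → List (MTL A)
  | .atom a => [.atom a]
  | .natom a => [.natom a]
  | .conj φ ψ => .conj φ ψ :: (φ.subfs ++ ψ.subfs)
  | .disj φ ψ => .disj φ ψ :: (φ.subfs ++ ψ.subfs)
  | .next I φ => .next I φ :: φ.subfs
  | .untl I φ ψ => .untl I φ ψ :: (φ.subfs ++ ψ.subfs)

/-- One-sided MTL: in every Until, the left argument is a pure LTL formula. -/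
def MTL.oneSided : MTL A → Prop
  | .atom _ | .natom _ => True
  | .conj φ ψ | .disj φ ψ => φ.oneSided ∧ ψ.oneSided
  | .next _ φ => φ.oneSided
  | .untl _ φ ψ => φ.isPure = true ∧ ψ.oneSided

/-! ## The MTL-to-1-ATA construction with deactivation -/

/-- Locations of the constructed automaton: the initial location `φ_init`,
locations for formulas (in particular Until subformulas and `φ` itself), and
locations `(X_I ψ)ʳ`. -/
inductive MLoc (A : Type*) where
  | start
  | form (ψ : MTL A)
  | nextr (I : NInterval) (ψ : MTL A)

/-- Prefix `x̄.` if `ψ` is pure LTL, and nothing otherwise. -/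
def barP (ψ : MTL A) (φ : TF (MLoc A)) : TF (MLoc A) :=
  if ψ.isPure then .deact φ else φ

/-- Prefix `x̄.` if `ψ` is pure LTL, and `x.` otherwise. -/
def rhoP (ψ : MTL A) (φ : TF (MLoc A)) : TF (MLoc A) :=
  if ψ.isPure then .deact φ else .reset φ

variable [DecidableEq A]

/-- The transition formula `δ(ψ, a)` for subformulas `ψ`. -/
def dform : MTL A → A → TF (MLoc A)
  | .atom b, a => if b = a then .tt else .ff
  | .natom b, a => if b = a then .ff else .tt
  | .conj φ ψ, a => .and (barP φ (dform φ a)) (barP ψ (dform ψ a))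
  | .disj φ ψ, a => .or (barP φ (dform φ a)) (barP ψ (dform ψ a))
  | .next I ψ, _ => .reset (.loc (.nextr I ψ))
  | .untl I φ ψ, a =>
      .or (.and (rhoP ψ (dform ψ a)) (.guard I))
          (.and (rhoP φ (dform φ a)) (.loc (.form (.untl I φ ψ))))

/-- The transition function of the constructed automaton `A'_φ`. -/
def mlocDelta (φ₀ : MTL A) : MLoc A → A → Option (TF (MLoc A))
  | .start, a => some (rhoP φ₀ (dform φ₀ a))
  | .form ψ, a => some (dform ψ a)
  | .nextr I ψ, a => some (.and (.guard I) (rhoP ψ (dform ψ a)))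

/-- The 1-ATA `A'_φ` constructed from an MTL formula `φ`:
initial location `φ_init`, no accepting locations. -/
def ataOf (φ : MTL A) : OneATA (MLoc A) A :=
  { init := .start, final := ∅, delta := mlocDelta φ }

end MTLDefs

section KB
variable {A : Type*}
/-- The recursive width bound `k_ψ`. -/
def kBound : MTL A → ℕ
  | .atom _ | .natom _ => 1
  | .conj φ ψ => if (MTL.conj φ ψ).isPure then 1 else kBound φ + kBound ψ
  | .disj φ ψ => if (MTL.disj φ ψ).isPure then 1 else max (kBound φ) (kBound ψ)
  | .next I φ => if (MTL.next I φ).isPure then 1 else kBound φ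
  | .untl I φ ψ => if (MTL.untl I φ ψ).isPure then 1 else kBound ψ
end KB


/-! ## Zones (variables `x_{q,i}`), nodes and their configuration semantics -/

section ZoneDefs

variable {Q A : Type*}

/-- A (semantic) zone: a finite set of variables `x_{q,i}` together with the
set of valuations satisfying its constraints. -/
structure SemZone (Q : Type*) where
  vars : Finset (Q × ℕ)
  val : ((Q × ℕ) → ℝ≥0) → Prop

/-- `γ` satisfies the node `(Z, IA)` via the surjection `h`. -/
def NodeSatVia (Z : SemZone Q) (IA : Finset (Q × ℕ)) (γ : Config Q)
    (h : Q × ℕ → Q × Option ℝ≥0) : Prop :=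
  (∀ y ∈ Z.vars ∪ IA, (h y).1 = y.1) ∧
  (∀ y ∈ Z.vars ∪ IA, h y ∈ γ) ∧
  (∀ s ∈ γ, ∃ y ∈ Z.vars ∪ IA, h y = s) ∧
  (∀ y ∈ IA, (h y).2 = none) ∧
  ∃ ν : (Q × ℕ) → ℝ≥0, (∀ y ∈ Z.vars, (h y).2 = some (ν y)) ∧ Z.val ν

/-- `γ ∈ ⟦(Z, IA)⟧`. -/
def NodeSat (Z : SemZone Q) (IA : Finset (Q × ℕ)) (γ : Config Q) : Prop :=
  ∃ h, NodeSatVia Z IA γ h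

/-- The special empty node `(Z_∅, {})`, satisfied exactly by the empty
configuration. -/
def emptySemZone {Q : Type*} : SemZone Q := ⟨∅, fun _ => True⟩

/-- The initial node `((x_{q₀,1} = 0), ∅)`. -/
def initSemZone (𝒜 : OneATA Q A) : SemZone Q :=
  ⟨{(𝒜.init, 1)}, fun ν => ν (𝒜.init, 1) = 0⟩

/-! ### Simple clauses and the successor computation -/

/-- A clause is a conjunction of atoms of the form `true`, `false`, `q`, `I`,
`x.q`, `x̄.q`. -/
def TF.isSimpleConj : TF Q → Bool
  | .tt => true
  | .ff => true
  | .loc _ => true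
  | .guard _ => true
  | .reset (.loc _) => true
  | .deact (.loc _) => true
  | .and φ ψ => φ.isSimpleConj && ψ.isSimpleConj
  | _ => false

/-- Every transition formula of the automaton is in disjunctive normal form. -/
def OneATA.normalized (𝒜 : OneATA Q A) : Prop :=
  ∀ q a φ, 𝒜.delta q a = some φ → ∀ C ∈ φ.disjuncts, C.isSimpleConj = true

/-- The interval atoms of a clause. -/
def TF.topGuards : TF Q → List NInterval
  | .guard I => [I]
  | .and φ ψ => φ.topGuards ++ ψ.topGuards
  | _ => []

/-- The location atoms `q` of a clause. -/
def TF.atomLocs : TF Q → List Q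
  | .loc q => [q]
  | .and φ ψ => φ.atomLocs ++ ψ.atomLocs
  | _ => []

/-- The reset atoms `x.q` of a clause. -/
def TF.resetLocs : TF Q → List Q
  | .reset (.loc q) => [q]
  | .and φ ψ => φ.resetLocs ++ ψ.resetLocs
  | _ => []

/-- The deactivation atoms `x̄.q` of a clause. -/
def TF.deactLocs : TF Q → List Q
  | .deact (.loc q) => [q]
  | .and φ ψ => φ.deactLocs ++ ψ.deactLocs
  | _ => []

/-- The inactive variable set of the successor node: `x'_{q,0}` for every atom
`x̄.q`, and for every atom `q` of a clause of an inactive variable. -/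
noncomputable def succIA (Z : SemZone Q) (IA : Finset (Q × ℕ))
    (T : Q × ℕ → TF Q) : Finset (Q × ℕ) :=
  ((Z.vars ∪ IA).biUnion fun y => ((T y).deactLocs.toFinset).image fun q => (q, 0)) ∪
  (IA.biUnion fun y => ((T y).atomLocs.toFinset).image fun q => (q, 0))

/-- Number of active variables whose clause contains the atom `q`. -/
noncomputable def copyCount (Z : SemZone Q) (T : Q × ℕ → TF Q) (q : Q) : ℕ :=
  (Z.vars.filter fun y => q ∈ (T y).atomLocs).card

/-- The active variable set of the successor node: `x'_{q,1}` for resets, and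
fresh variables `x'_{q,ℓ}` with `2 ≤ ℓ` (smallest free indices) for atoms `q`
of clauses of active variables. -/
noncomputable def succVars (Z : SemZone Q) (IA : Finset (Q × ℕ))
    (T : Q × ℕ → TF Q) : Finset (Q × ℕ) :=
  (((Z.vars ∪ IA).biUnion fun y => (T y).resetLocs.toFinset).image fun q => (q, 1)) ∪
  ((Z.vars.biUnion fun y => (T y).atomLocs.toFinset).biUnion fun q =>
    (Finset.Icc 2 (copyCount Z T q + 1)).image fun i => (q, i))

/-- The successor computation on nodes:  time elapse, guard intersection,
reset/deactivation with fresh variables, and renaming (canonicalization is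
semantically transparent).  `T` assigns to every variable of the node a
disjunct of the transition formula of its location on the letter `a`.  If a
chosen disjunct is `false`, the target is discarded; if all chosen disjuncts
are `true`, the successor is the special empty node. -/
def Succ (𝒜 : OneATA Q A) (Z : SemZone Q) (IA : Finset (Q × ℕ)) (a : A)
    (T : Q × ℕ → TF Q) (Z' : SemZone Q) (IA' : Finset (Q × ℕ)) : Prop :=
  (∀ y ∈ Z.vars ∪ IA, 𝒜.isTarget y.1 a (T y)) ∧
  (∀ y ∈ Z.vars ∪ IA, T y ≠ TF.ff) ∧
  ((∀ y ∈ Z.vars ∪ IA, T y = TF.tt) → (Z' = emptySemZone ∧ IA' = ∅)) ∧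
  ((¬ ∀ y ∈ Z.vars ∪ IA, T y = TF.tt) →
    IA' = succIA Z IA T ∧
    Z'.vars = succVars Z IA T ∧
    ∃ g : (Q × ℕ) → Q → ℕ,
      (∀ y ∈ Z.vars, ∀ q ∈ (T y).atomLocs, 2 ≤ g y q ∧ g y q ≤ copyCount Z T q + 1) ∧
      (∀ y₁ ∈ Z.vars, ∀ y₂ ∈ Z.vars, ∀ q, q ∈ (T y₁).atomLocs → q ∈ (T y₂).atomLocs →
        g y₁ q = g y₂ q → y₁ = y₂) ∧
      Z'.val = fun ν' => ∃ (ν : (Q × ℕ) → ℝ≥0) (d : ℝ≥0), Z.val ν ∧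
        (∀ y ∈ Z.vars, ∀ I ∈ (T y).topGuards, I.mem (ν y + d)) ∧
        (∀ y ∈ Z.vars ∪ IA, ∀ q ∈ (T y).resetLocs, ν' (q, 1) = 0) ∧
        (∀ y ∈ Z.vars, ∀ q ∈ (T y).atomLocs, ν' (q, g y q) = ν y + d))

/-- Time elapse on a single state. -/
noncomputable def stDelay (s : Q × Option ℝ≥0) (d : ℝ≥0) : Q × Option ℝ≥0 :=
  (s.1, s.2.map (· + d))

/-- `γ →^{d,a,(C₁,…,C_m)} γ'` where the disjuncts chosen in the step correspond,
via a surjection witnessing `γ ∈ ⟦(Z,IA)⟧`, to the target tuple `T` of the node. -/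
def StepMatching (𝒜 : OneATA Q A) (Z : SemZone Q) (IA : Finset (Q × ℕ))
    (γ : Config Q) (d : ℝ≥0) (a : A) (T : Q × ℕ → TF Q) (γ' : Config Q) : Prop :=
  ∃ h χ, NodeSatVia Z IA γ h ∧
    (∀ y ∈ Z.vars ∪ IA, χ (stDelay (h y) d) = T y) ∧
    𝒜.Step γ d a χ γ'

/-- Reachability in the zone graph. -/
inductive ZReach (𝒜 : OneATA Q A) :
    SemZone Q × Finset (Q × ℕ) → SemZone Q × Finset (Q × ℕ) → Prop
  | refl (n) : ZReach 𝒜 n n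
  | step {n₁ n₂ n₃} (a : A) (T) :
      ZReach 𝒜 n₁ n₂ → Succ 𝒜 n₂.1 n₂.2 a T n₃.1 n₃.2 → ZReach 𝒜 n₁ n₃

/-- A node is accepting if the locations of all its variables are accepting. -/
def AccNode (𝒜 : OneATA Q A) (Z : SemZone Q) (IA : Finset (Q × ℕ)) : Prop :=
  ∀ y ∈ Z.vars ∪ IA, y.1 ∈ 𝒜.final

/-! ### Entailment between nodes -/

/-- Node entailment `(Z,IA) ⊨_M (Z',IA')`. -/
def NodeEntails (M : ℕ) (Z : SemZone Q) (IA : Finset (Q × ℕ))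
    (Z' : SemZone Q) (IA' : Finset (Q × ℕ)) : Prop :=
  ∀ γ', NodeSat Z' IA' γ' → ∃ γ, NodeSat Z IA γ ∧ CfgEntails M γ γ'

/-- Classical region equivalence between valuations over the variable set `V`. -/
def ValRegEquiv (M : ℕ) (V : Finset (Q × ℕ)) (u u' : (Q × ℕ) → ℝ≥0) : Prop :=
  (∀ y ∈ V, ((u y ≤ (M : ℝ≥0)) ↔ (u' y ≤ (M : ℝ≥0))) ∧
    (u y ≤ (M : ℝ≥0) →
      (⌊(u y : ℝ)⌋ = ⌊(u' y : ℝ)⌋ ∧ (Int.fract (u y : ℝ) = 0 ↔ Int.fract (u' y : ℝ) = 0)))) ∧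
  (∀ y ∈ V, ∀ z ∈ V, u y ≤ (M : ℝ≥0) → u z ≤ (M : ℝ≥0) →
    (Int.fract (u y : ℝ) ≤ Int.fract (u z : ℝ) ↔
      Int.fract (u' y : ℝ) ≤ Int.fract (u' z : ℝ)))

/-- The bounded entailment check `(Z,IA) ⊨ᵇ_M (Z',IA')`, for zones over the same
variables, using the identity correspondence of variables. -/
def BoundedEntails (M : ℕ) (Z : SemZone Q) (IA : Finset (Q × ℕ))
    (Z' : SemZone Q) (IA' : Finset (Q × ℕ)) : Prop :=
  IA ⊆ IA' ∧ ∀ u', Z'.val u' → ∃ u, Z.val u ∧ ValRegEquiv M Z.vars u u'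

/-! ### Syntactic zones -/

/-- Comparison relations in zone constraints. -/
inductive ZRel | lt | le | gt | ge

def ZRel.holds : ZRel → ℝ → ℝ → Prop
  | .lt, x, y => x < y
  | .le, x, y => x ≤ y
  | .gt, x, y => x > y
  | .ge, x, y => x ≥ y

/-- A zone constraint: `y ∼ k` or `y − x ∼ k` with `k ∈ ℤ`. -/
inductive ZConstr (Q : Type*) where
  | single (y : Q × ℕ) (r : ZRel) (k : ℤ)
  | diff (y x : Q × ℕ) (r : ZRel) (k : ℤ)

def ZConstr.holds (ν : (Q × ℕ) → ℝ≥0) : ZConstr Q → Prop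
  | .single y r k => r.holds (ν y : ℝ) (k : ℝ)
  | .diff y x r k => r.holds ((ν y : ℝ) - (ν x : ℝ)) (k : ℝ)

/-- The variables occurring in a constraint. -/
def ZConstr.varsIn : ZConstr Q → List (Q × ℕ)
  | .single y _ _ => [y]
  | .diff y x _ _ => [y, x]

/-- A (syntactic) zone: a finite set of variables and a finite conjunction of
constraints. -/
structure Zone (Q : Type*) where
  vars : Finset (Q × ℕ)
  constrs : List (ZConstr Q)

def Zone.satBy (Z : Zone Q) (ν : (Q × ℕ) → ℝ≥0) : Prop :=
  ∀ c ∈ Z.constrs, c.holds ν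

/-- Constraints only mention variables of the zone. -/
def Zone.wf (Z : Zone Q) : Prop :=
  ∀ c ∈ Z.constrs, ∀ v ∈ c.varsIn, v ∈ Z.vars

/-- The semantic zone of a syntactic zone. -/
def Zone.toSem (Z : Zone Q) : SemZone Q := ⟨Z.vars, Z.satBy⟩

/-! ### The `N'_r` sets for the entailment check -/

/-- Location preserving one-to-one mapping from `Var(Z)` to `Var(Z')`. -/
def LocPresInj (Z Z' : Zone Q) (r : Q × ℕ → Q × ℕ) : Prop :=
  Set.InjOn r ↑Z.vars ∧ (∀ y ∈ Z.vars, r y ∈ Z'.vars) ∧ ∀ y ∈ Z.vars, (r y).1 = y.1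

/-- `γ' ∈ N'_r` : `γ'` satisfies `(Z', IA')` via a surjection whose induced
valuation, transported back along `r`, is region equivalent to no valuation
satisfying `Z`. -/
def InNr (M : ℕ) (Z Z' : Zone Q) (IA' : Finset (Q × ℕ))
    (r : Q × ℕ → Q × ℕ) (γ' : Config Q) : Prop :=
  ∃ (h' : Q × ℕ → Q × Option ℝ≥0) (ν' : (Q × ℕ) → ℝ≥0),
    (∀ y ∈ Z'.vars ∪ IA', (h' y).1 = y.1) ∧
    (∀ y ∈ Z'.vars ∪ IA', h' y ∈ γ') ∧
    (∀ s ∈ γ', ∃ y ∈ Z'.vars ∪ IA', h' y = s) ∧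
    (∀ y ∈ IA', (h' y).2 = none) ∧
    (∀ y ∈ Z'.vars, (h' y).2 = some (ν' y)) ∧
    Z'.satBy ν' ∧
    ∀ ν, Z.satBy ν → ¬ ValRegEquiv M Z.vars ν (fun y => ν' (r y))

end ZoneDefs


/-! ## The zones `Z_φ` and `Z'_φ` constructed from a monotone 3-CNF formula -/

/-- The two locations `q_x` and `q_y`. -/
inductive XY | qx | qy
deriving DecidableEq

/-- The zone variables used in the reduction, for a formula with `m` clauses:
`px_j, py_j, nx_j, ny_j` (dummy clauses), `x^i_j, y^i_j` (clause literals) for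
`Z'_φ`, and `x⁺_j, y⁺_j, x⁻_j, y⁻_j` for `Z_φ`. -/
inductive MVar (m : ℕ) where
  | px (j : Fin 3)
  | py (j : Fin 3)
  | nx (j : Fin 3)
  | ny (j : Fin 3)
  | xc (i : Fin m) (j : Fin 3)
  | yc (i : Fin m) (j : Fin 3)
  | xp (j : Fin 3)
  | yp (j : Fin 3)
  | xm (j : Fin 3)
  | ym (j : Fin 3)
deriving DecidableEq

section Mono

variable {m : ℕ}

/-- The location of each variable. -/
def MVar.loc : MVar m → XY
  | .px _ | .nx _ | .xc _ _ | .xp _ | .xm _ => .qx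
  | .py _ | .ny _ | .yc _ _ | .yp _ | .ym _ => .qy

def MVar.inZ : MVar m → Prop
  | .xp _ | .yp _ | .xm _ | .ym _ => True
  | _ => False

/-- The variables of `Z_φ`. -/
def ZVars (m : ℕ) : Set (MVar m) := {y | y.inZ}

/-- The variables of `Z'_φ`. -/
def Z'Vars (m : ℕ) : Set (MVar m) := {y | ¬ y.inZ}

/-- `γ` satisfies the node `(Z, ∅)` (zone given semantically by the predicate
`P` on valuations, over the variable set `V`) via the surjection `h`. -/
def MSat (V : Set (MVar m)) (P : (MVar m → ℝ≥0) → Prop) (γ : Config XY)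
    (h : MVar m → XY × Option ℝ≥0) : Prop :=
  (∀ y ∈ V, (h y).1 = y.loc) ∧
  (∀ y ∈ V, h y ∈ γ) ∧
  (∀ s ∈ γ, ∃ y ∈ V, h y = s) ∧
  ∃ ν : MVar m → ℝ≥0, (∀ y ∈ V, (h y).2 = some (ν y)) ∧ P ν

/-- The constraints of the zone `Z_φ` (with `k` positive clauses and `m`
clauses in total). -/
def ZphiSat (m k : ℕ) (ν : MVar m → ℝ≥0) : Prop :=
  (∀ j : Fin 3, 0 ≤ (ν (.yp j) : ℝ) - ν (.xp j) ∧ (ν (.yp j) : ℝ) - ν (.xp j) ≤ 1) ∧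
  (∀ j : Fin 3, 1 < (ν (.ym j) : ℝ) - ν (.xm j) ∧ (ν (.ym j) : ℝ) - ν (.xm j) ≤ 2) ∧
  (∀ j : Fin 2, 1 ≤ (ν (.xp j.succ) : ℝ) - ν (.yp j.castSucc) ∧
      (ν (.xp j.succ) : ℝ) - ν (.yp j.castSucc) ≤ 5) ∧
  (∀ j : Fin 2, 1 ≤ (ν (.xm j.succ) : ℝ) - ν (.ym j.castSucc) ∧
      (ν (.xm j.succ) : ℝ) - ν (.ym j.castSucc) ≤ 5) ∧
  ((ν (.yp 2) : ℝ) < 14 * ((k : ℝ) + 1) - 2) ∧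
  ((ν (.xm 0) : ℝ) > 14 * ((k : ℝ) + 1) - 2) ∧
  ((ν (.ym 2) : ℝ) - ν (.xp 0) < 14 * ((m : ℝ) + 2) - 6)

/-- The constraints of the zone `Z'_φ`, for a monotone 3-CNF formula whose
`i`-th clause has literals on the propositional variables `lits i 0`,
`lits i 1`, `lits i 2`. -/
def Z'phiSat (m : ℕ) {PV : Type*} (lits : Fin m → Fin 3 → PV)
    (ν : MVar m → ℝ≥0) : Prop :=
  (∀ j : Fin 3, (ν (.px j) : ℝ) = 3 * (j : ℕ) ∧ (ν (.py j) : ℝ) = 3 * (j : ℕ)) ∧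
  (∀ j : Fin 3, (ν (.nx j) : ℝ) = 14 * ((m : ℝ) + 1) + 3 * (j : ℕ) ∧
      (ν (.ny j) : ℝ) = 14 * ((m : ℝ) + 1) + 3 * (j : ℕ) + 2) ∧
  (∀ (i : Fin m) (j : Fin 3),
      14 * ((i : ℕ) + 1 : ℝ) + 3 * (j : ℕ) ≤ (ν (.xc i j) : ℝ) ∧
      (ν (.xc i j) : ℝ) ≤ 14 * ((i : ℕ) + 1 : ℝ) + 3 * (j : ℕ) + 2 ∧
      14 * ((i : ℕ) + 1 : ℝ) + 3 * (j : ℕ) ≤ (ν (.yc i j) : ℝ) ∧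
      (ν (.yc i j) : ℝ) ≤ 14 * ((i : ℕ) + 1 : ℝ) + 3 * (j : ℕ) + 2 ∧
      (ν (.xc i j) : ℝ) ≤ (ν (.yc i j) : ℝ)) ∧
  (∀ (i i' : Fin m) (j j' : Fin 3), lits i j = lits i' j' →
      (ν (.xc i' j') : ℝ) - ν (.xc i j) = 14 * (((i' : ℕ) : ℝ) - ((i : ℕ) : ℝ)) +
        3 * (((j' : ℕ) : ℝ) - ((j : ℕ) : ℝ)) ∧
      (ν (.yc i' j') : ℝ) - ν (.yc i j) = 14 * (((i' : ℕ) : ℝ) - ((i : ℕ) : ℝ)) +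
        3 * (((j' : ℕ) : ℝ) - ((j : ℕ) : ℝ)))

/-- The (real) value of a state of a configuration. -/
noncomputable def sval (s : XY × Option ℝ≥0) : ℝ := ((s.2.getD 0 : ℝ≥0) : ℝ)

/-- The assignment `α_{γ'}` extracted from a surjection `h'` witnessing that a
configuration satisfies `(Z'_φ, ∅)`: a propositional variable is true iff the
difference `y − x` of (one of) its literal occurrences exceeds 1. -/
def alphaOf {PV : Type*} (lits : Fin m → Fin 3 → PV)
    (h' : MVar m → XY × Option ℝ≥0) (p : PV) : Prop :=
  ∃ (i : Fin m) (j : Fin 3), lits i j = p ∧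
    1 < sval (h' (.yc i j)) - sval (h' (.xc i j))

/-- The assignment `α` falsifies clause `C_i` (clauses `C_1, …, C_k` are
positive, the rest negative): all of its literals are false. -/
def Falsifies {PV : Type*} (k : ℕ) (lits : Fin m → Fin 3 → PV)
    (α : PV → Prop) (i : Fin m) : Prop :=
  if (i : ℕ) < k then ∀ j : Fin 3, ¬ α (lits i j) else ∀ j : Fin 3, α (lits i j)

/-- The monotone 3-CNF formula is satisfiable. -/
def MonoSatisfiable {PV : Type*} (k : ℕ) (lits : Fin m → Fin 3 → PV) : Prop :=
  ∃ α : PV → Prop, ∀ i : Fin m, ¬ Falsifies k lits α i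

end Mono

/-!
Give every location `q` of `A'_φ` a weight `w q` such that, for each letter, a minimal model of
`δ(q, a)` read at an active clock contains active states of total weight at most `w q`, and one
read at an inactive clock contains none. The total active weight of a configuration then never
increases along a run. The weights are computed bottom-up along the formula (`MTL.succWeight`);
they exist because the formula is one-sided: staying in `ψ₁ U_I ψ₂` with `ψ₁` pure LTL only
deactivates the obligations of `ψ₁`. Inactive states arise only at pure-LTL locations, which
spawn no active states.

Every active location has weight at least one except the locations `(X_I ψ)ʳ` with `ψ` pure.
These are always created with clock value `0` and then age together, so at any time there is at
most one of them per subformula `X_I ψ`.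
-/

section ActiveWeight

open Finset

variable {Q A : Type*}

def TF.atoms : TF Q → Option ℝ≥0 → Set (Q × Option ℝ≥0)
  | .loc q, v => {(q, v)}
  | .and φ ψ, v | .or φ ψ, v => φ.atoms v ∪ ψ.atoms v
  | .reset φ, _ => φ.atoms (some 0)
  | .deact φ, _ => φ.atoms none
  | .tt, _ | .ff, _ | .guard _, _ => ∅

def stateWeight (w : Q → ℕ) (s : Q × Option ℝ≥0) : ℕ :=
  if s.2.isSome then w s.1 else 0

def activeWeight (w : Q → ℕ) (M : Config Q) : ℕ :=
  ∑ s ∈ M, stateWeight w s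

/-- `b` records whether the clock value the formula is read at is active. -/
def TF.weightBound (w : Q → ℕ) : TF Q → Bool → ℕ
  | .loc q, b => if b then w q else 0
  | .and φ ψ, b => φ.weightBound w b + ψ.weightBound w b
  | .or φ ψ, b => max (φ.weightBound w b) (ψ.weightBound w b)
  | .reset φ, _ => φ.weightBound w true
  | .deact φ, _ => φ.weightBound w false
  | .tt, _ | .ff, _ | .guard _, _ => 0

theorem activeWeight_union_le (w : Q → ℕ) (M M' : Config Q) :
    activeWeight w (M ∪ M') ≤ activeWeight w M + activeWeight w M' := by
  unfold activeWeight
  rw [← sum_union_inter]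
  exact Nat.le_add_right _ _

theorem activeWeight_biUnion_le (w : Q → ℕ) (γ : Config Q)
    (Mo : Q × Option ℝ≥0 → Config Q) :
    activeWeight w (γ.biUnion Mo) ≤ ∑ s ∈ γ, activeWeight w (Mo s) := by
  induction γ using Finset.induction_on with
  | empty => simp [activeWeight]
  | insert s γ hs ih =>
    rw [biUnion_insert, sum_insert hs]
    exact (activeWeight_union_le w _ _).trans (Nat.add_le_add_left ih _)

theorem activeWeight_delay (w : Q → ℕ) (γ : Config Q) (d : ℝ≥0) :
    activeWeight w (γ.delay d) = activeWeight w γ := by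
  have hinj : Function.Injective fun s : Q × Option ℝ≥0 => (s.1, s.2.map (· + d)) := by
    intro s t hst
    simp only [Prod.mk.injEq] at hst
    exact Prod.ext hst.1 (Option.map_injective (add_left_injective d) hst.2)
  unfold activeWeight Config.delay
  rw [sum_image fun s _ t _ hst => hinj hst]
  simp [stateWeight]

theorem card_le_activeWeight {w : Q → ℕ} {S γ : Config Q} (hS : S ⊆ γ)
    (hpos : ∀ s ∈ S, 1 ≤ stateWeight w s) : #S ≤ activeWeight w γ :=
  calc #S = ∑ _s ∈ S, 1 := card_eq_sum_ones S
    _ ≤ ∑ s ∈ S, stateWeight w s := sum_le_sum hpos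
    _ ≤ activeWeight w γ := sum_le_sum_of_subset hS

theorem TF.sat_mono {M M' : Config Q} (hM : M ⊆ M') {φ : TF Q} {v : Option ℝ≥0}
    (h : φ.sat M v) : φ.sat M' v := by
  induction φ generalizing v with
  | loc q => exact hM h
  | and φ ψ ihφ ihψ => exact ⟨ihφ h.1, ihψ h.2⟩
  | or φ ψ ihφ ihψ => exact h.imp ihφ ihψ
  | reset φ ih | deact φ ih => exact ih h
  | tt | ff | guard => exact h

theorem TF.exists_sat_subset (w : Q → ℕ) {M : Config Q} {φ : TF Q} {v : Option ℝ≥0}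
    (h : φ.sat M v) : ∃ M' ⊆ M, φ.sat M' v ∧ ↑M' ⊆ φ.atoms v ∧
      activeWeight w M' ≤ φ.weightBound w v.isSome := by
  induction φ generalizing v with
  | tt | guard => exact ⟨∅, empty_subset _, h, by simp, by simp [activeWeight]⟩
  | ff => exact h.elim
  | loc q =>
    refine ⟨{(q, v)}, singleton_subset_iff.2 h, mem_singleton_self _, by simp [TF.atoms], ?_⟩
    simp [activeWeight, stateWeight, TF.weightBound]
  | and φ ψ ihφ ihψ =>
    obtain ⟨M₁, hM₁, hsat₁, hat₁, hw₁⟩ := ihφ h.1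
    obtain ⟨M₂, hM₂, hsat₂, hat₂, hw₂⟩ := ihψ h.2
    refine ⟨M₁ ∪ M₂, union_subset hM₁ hM₂,
      ⟨TF.sat_mono subset_union_left hsat₁, TF.sat_mono subset_union_right hsat₂⟩, ?_,
      (activeWeight_union_le w M₁ M₂).trans (Nat.add_le_add hw₁ hw₂)⟩
    rw [coe_union]
    exact Set.union_subset_union hat₁ hat₂
  | or φ ψ ihφ ihψ =>
    rcases h with h | h
    · obtain ⟨M', hM', hsat, hat, hw⟩ := ihφ h
      exact ⟨M', hM', Or.inl hsat, hat.trans Set.subset_union_left, hw.trans (le_max_left ..)⟩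
    · obtain ⟨M', hM', hsat, hat, hw⟩ := ihψ h
      exact ⟨M', hM', Or.inr hsat, hat.trans Set.subset_union_right, hw.trans (le_max_right ..)⟩
  | reset φ ih | deact φ ih => exact ih h

theorem MinModel.eq_of_subset {M M' : Config Q} {v : Option ℝ≥0} {φ : TF Q}
    (h : MinModel M v φ) (hM' : M' ⊆ M) (hsat : φ.sat M' v) : M' = M := by
  by_contra hne
  exact h.2 M' (Finset.ssubset_iff_subset_ne.2 ⟨hM', hne⟩) hsat

theorem MinModel.subset_atoms {M : Config Q} {v : Option ℝ≥0} {φ : TF Q}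
    (h : MinModel M v φ) : ↑M ⊆ φ.atoms v := by
  obtain ⟨M', hM', hsat, hat, -⟩ := TF.exists_sat_subset (fun _ => 0) h.1
  rwa [← h.eq_of_subset hM' hsat]

theorem MinModel.activeWeight_le (w : Q → ℕ) {M : Config Q} {v : Option ℝ≥0} {φ : TF Q}
    (h : MinModel M v φ) : activeWeight w M ≤ φ.weightBound w v.isSome := by
  obtain ⟨M', hM', hsat, -, hw⟩ := TF.exists_sat_subset w h.1
  rwa [← h.eq_of_subset hM' hsat]

theorem TF.atoms_subset_of_mem_disjuncts {C φ : TF Q} (h : C ∈ φ.disjuncts)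
    (v : Option ℝ≥0) : C.atoms v ⊆ φ.atoms v := by
  induction φ with
  | or φ ψ ihφ ihψ =>
    rcases List.mem_append.1 h with h | h
    · exact (ihφ h).trans Set.subset_union_left
    · exact (ihψ h).trans Set.subset_union_right
  | _ => rw [List.mem_singleton.1 h]

theorem TF.weightBound_le_of_mem_disjuncts (w : Q → ℕ) {C φ : TF Q} (h : C ∈ φ.disjuncts)
    (b : Bool) : C.weightBound w b ≤ φ.weightBound w b := by
  induction φ with
  | or φ ψ ihφ ihψ =>
    rcases List.mem_append.1 h with h | h
    · exact (ihφ h).trans (le_max_left ..)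
    · exact (ihψ h).trans (le_max_right ..)
  | _ => rw [List.mem_singleton.1 h]

theorem OneATA.DStep.exists_atoms_of_mem {𝒜 : OneATA Q A} {γ γ' : Config Q} {a : A}
    {χ : Q × Option ℝ≥0 → TF Q} (hstep : 𝒜.DStep γ a χ γ') {t : Q × Option ℝ≥0}
    (ht : t ∈ γ') : ∃ s ∈ γ, ∃ X, 𝒜.delta s.1 a = some X ∧ t ∈ X.atoms s.2 := by
  obtain ⟨htarget, Mo, hmin, rfl⟩ := hstep
  obtain ⟨s, hs, hts⟩ := mem_biUnion.1 ht
  obtain ⟨X, hX, hχ⟩ := htarget s hs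
  exact ⟨s, hs, X, hX, TF.atoms_subset_of_mem_disjuncts hχ _ ((hmin s hs).subset_atoms hts)⟩

theorem OneATA.DStep.activeWeight_le {𝒜 : OneATA Q A} {γ γ' : Config Q} {a : A}
    {χ : Q × Option ℝ≥0 → TF Q} (hstep : 𝒜.DStep γ a χ γ') (w : Q → ℕ)
    (hw : ∀ s ∈ γ, ∀ X, 𝒜.delta s.1 a = some X → X.weightBound w s.2.isSome ≤ stateWeight w s) :
    activeWeight w γ' ≤ activeWeight w γ := by
  obtain ⟨htarget, Mo, hmin, rfl⟩ := hstep
  refine (activeWeight_biUnion_le w γ Mo).trans (sum_le_sum fun s hs => ?_)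
  obtain ⟨X, hX, hχ⟩ := htarget s hs
  calc activeWeight w (Mo s) ≤ (χ s).weightBound w s.2.isSome := (hmin s hs).activeWeight_le w
    _ ≤ X.weightBound w s.2.isSome := TF.weightBound_le_of_mem_disjuncts w hχ _
    _ ≤ stateWeight w s := hw s hs X hX

end ActiveWeight

section Subformulas

variable {A : Type*}

theorem MTL.mem_subfs_self (ψ : MTL A) : ψ ∈ ψ.subfs := by
  cases ψ <;> simp [MTL.subfs]

theorem MTL.subfs_trans {χ ψ θ : MTL A} (hθ : θ ∈ ψ.subfs) (hψ : ψ ∈ χ.subfs) :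
    θ ∈ χ.subfs := by
  induction χ with
  | atom | natom => rwa [List.mem_singleton.1 hψ] at hθ
  | conj _ _ ihφ ihψ | disj _ _ ihφ ihψ | untl _ _ _ ihφ ihψ =>
    simp only [MTL.subfs, List.mem_cons, List.mem_append] at hψ ⊢
    rcases hψ with rfl | hψ | hψ
    · simpa [MTL.subfs] using hθ
    · exact .inr (.inl (ihφ hψ))
    · exact .inr (.inr (ihψ hψ))
  | next _ _ ih =>
    simp only [MTL.subfs, List.mem_cons] at hψ ⊢
    rcases hψ with rfl | hψ
    · simpa [MTL.subfs] using hθ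
    · exact .inr (ih hψ)

theorem MTL.isPure_of_mem_subfs {χ ψ : MTL A} (hχ : χ.isPure) (hψ : ψ ∈ χ.subfs) :
    ψ.isPure := by
  induction χ with
  | atom | natom => rwa [List.mem_singleton.1 hψ]
  | conj _ _ ihφ ihψ | disj _ _ ihφ ihψ | untl _ _ _ ihφ ihψ =>
    simp only [MTL.subfs, List.mem_cons, List.mem_append] at hψ
    simp only [MTL.isPure, Bool.and_eq_true] at hχ
    rcases hψ with rfl | hψ | hψ
    · simp [MTL.isPure, hχ]
    · exact ihφ (by tauto) hψ
    · exact ihψ (by tauto) hψ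
  | next _ _ ih =>
    simp only [MTL.subfs, List.mem_cons] at hψ
    simp only [MTL.isPure, Bool.and_eq_true] at hχ
    rcases hψ with rfl | hψ
    · simp [MTL.isPure, hχ]
    · exact ih hχ.2 hψ

theorem MTL.oneSided_of_isPure {χ : MTL A} (h : χ.isPure) : χ.oneSided := by
  induction χ <;> simp_all [MTL.isPure, MTL.oneSided]

theorem MTL.oneSided_of_mem_subfs {χ ψ : MTL A} (hχ : χ.oneSided) (hψ : ψ ∈ χ.subfs) :
    ψ.oneSided := by
  induction χ with
  | atom | natom => rwa [List.mem_singleton.1 hψ]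
  | conj _ _ ihφ ihψ | disj _ _ ihφ ihψ =>
    simp only [MTL.subfs, List.mem_cons, List.mem_append] at hψ
    rcases hψ with rfl | hψ | hψ
    · exact hχ
    · exact ihφ hχ.1 hψ
    · exact ihψ hχ.2 hψ
  | untl _ _ _ _ ihψ =>
    simp only [MTL.subfs, List.mem_cons, List.mem_append] at hψ
    rcases hψ with rfl | hψ | hψ
    · exact hχ
    · exact MTL.oneSided_of_isPure (MTL.isPure_of_mem_subfs hχ.1 hψ)
    · exact ihψ hχ.2 hψ
  | next _ _ ih =>
    simp only [MTL.subfs, List.mem_cons] at hψ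
    rcases hψ with rfl | hψ
    · exact hχ
    · exact ih hχ hψ

end Subformulas

section Weights

variable {A : Type*}

/-- The value of `(dform ψ a).weightBound (locWeight φ₀) b`, see `weightBound_dform`. -/
def MTL.succWeight : MTL A → Bool → ℕ
  | .atom _, _ | .natom _, _ => 0
  | .conj φ ψ, b => φ.succWeight (b && !φ.isPure) + ψ.succWeight (b && !ψ.isPure)
  | .disj φ ψ, b => max (φ.succWeight (b && !φ.isPure)) (ψ.succWeight (b && !ψ.isPure))
  | .next _ ψ, _ => ψ.succWeight (!ψ.isPure)
  | .untl _ φ ψ, b => max (ψ.succWeight (!ψ.isPure))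
      (φ.succWeight (!φ.isPure) + if b then 1 + ψ.succWeight (!ψ.isPure) else 0)

/-- The weight of `ρ.δ(ψ, a)`, where `ρ` is `x̄` if `ψ` is pure LTL and `x` otherwise. -/
def MTL.rhoWeight (ψ : MTL A) : ℕ := ψ.succWeight (!ψ.isPure)

def locWeight (φ₀ : MTL A) : MLoc A → ℕ
  | .start => max 1 φ₀.rhoWeight
  | .form (.untl _ _ ψ) => 1 + ψ.rhoWeight
  | .form ψ => max 1 (ψ.succWeight true) -- never reached: only Until locations occur
  | .nextr _ ψ => ψ.rhoWeight

def locForm (φ₀ : MTL A) : MLoc A → MTL A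
  | .start => φ₀
  | .form ψ => ψ
  | .nextr I ψ => .next I ψ

theorem MTL.succWeight_false_of_isPure {ψ : MTL A} (h : ψ.isPure) : ψ.succWeight false = 0 := by
  induction ψ <;> simp_all [MTL.succWeight, MTL.isPure]

theorem weightBound_barP (w : MLoc A → ℕ) (θ : MTL A) (X : TF (MLoc A)) (b : Bool) :
    (barP θ X).weightBound w b = X.weightBound w (b && !θ.isPure) := by
  unfold barP
  cases θ.isPure <;> simp [TF.weightBound]

theorem weightBound_rhoP (w : MLoc A → ℕ) (θ : MTL A) (X : TF (MLoc A)) (b : Bool) :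
    (rhoP θ X).weightBound w b = X.weightBound w (!θ.isPure) := by
  unfold rhoP
  cases θ.isPure <;> simp [TF.weightBound]

variable [DecidableEq A]

theorem weightBound_dform (φ₀ ψ : MTL A) (a : A) (b : Bool) :
    (dform ψ a).weightBound (locWeight φ₀) b = ψ.succWeight b := by
  induction ψ generalizing b with
  | atom c | natom c =>
    simp only [dform]
    split_ifs <;> rfl
  | conj φ ψ ihφ ihψ | disj φ ψ ihφ ihψ =>
    simp only [dform, TF.weightBound, weightBound_barP, ihφ, ihψ, MTL.succWeight]
  | next I ψ => rfl
  | untl I φ ψ ihφ ihψ =>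
    cases b <;>
      simp [dform, TF.weightBound, weightBound_rhoP, ihφ, ihψ, MTL.succWeight, locWeight,
        MTL.rhoWeight]

theorem weightBound_delta_true_le {φ₀ : MTL A} (hos : φ₀.oneSided) {q : MLoc A}
    (hq : locForm φ₀ q ∈ φ₀.subfs) {a : A} {X : TF (MLoc A)} (hX : mlocDelta φ₀ q a = some X) :
    X.weightBound (locWeight φ₀) true ≤ locWeight φ₀ q := by
  cases q with
  | start =>
    cases hX
    simp [weightBound_rhoP, weightBound_dform, locWeight, MTL.rhoWeight]
  | nextr I ψ =>
    cases hX
    simp [TF.weightBound, weightBound_rhoP, weightBound_dform, locWeight, MTL.rhoWeight]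
  | form ψ =>
    cases hX
    rw [weightBound_dform]
    cases ψ with
    | untl J θ₁ θ₂ =>
      have hpure : θ₁.isPure := (MTL.oneSided_of_mem_subfs hos hq).1
      simp [MTL.succWeight, locWeight, MTL.rhoWeight, hpure, MTL.succWeight_false_of_isPure hpure]
    | _ => exact le_max_right ..

theorem weightBound_delta_false_of_isPure {φ₀ : MTL A} {q : MLoc A}
    (hq : (locForm φ₀ q).isPure) {a : A} {X : TF (MLoc A)} (hX : mlocDelta φ₀ q a = some X) :
    X.weightBound (locWeight φ₀) false = 0 := by
  cases q with
  | start =>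
    cases hX
    have hφ₀ : φ₀.isPure := hq
    simp [weightBound_rhoP, weightBound_dform, hφ₀, MTL.succWeight_false_of_isPure hφ₀]
  | form ψ =>
    cases hX
    exact (weightBound_dform φ₀ ψ a false).trans (MTL.succWeight_false_of_isPure hq)
  | nextr I ψ =>
    have hψ : ψ.isPure := by simp_all [locForm, MTL.isPure]
    cases hX
    simp [TF.weightBound, weightBound_rhoP, weightBound_dform, hψ,
      MTL.succWeight_false_of_isPure hψ]

end Weights

section Successors

variable {A : Type*}

/-- The possible atoms of `δ(ψ, a)` read at clock value `v`. -/
def SpawnedBy (ψ : MTL A) (v : Option ℝ≥0) (t : MLoc A × Option ℝ≥0) : Prop :=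
  (∃ I θ, .next I θ ∈ ψ.subfs ∧ t = (.nextr I θ, some 0)) ∨
    (∃ θ ∈ ψ.subfs, t.1 = .form θ ∧ (t.2 = none → θ.isPure ∨ v = none))

namespace SpawnedBy

variable {ψ χ : MTL A} {v v' : Option ℝ≥0} {t : MLoc A × Option ℝ≥0}

theorem mono (hψ : ψ ∈ χ.subfs) : SpawnedBy ψ v t → SpawnedBy χ v t := by
  rintro (⟨I, θ, hθ, rfl⟩ | ⟨θ, hθ, h₁, h₂⟩)
  · exact .inl ⟨I, θ, MTL.subfs_trans hθ hψ, rfl⟩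
  · exact .inr ⟨θ, MTL.subfs_trans hθ hψ, h₁, h₂⟩

theorem of_isPure (hψ : ψ.isPure) : SpawnedBy ψ v' t → SpawnedBy ψ v t := by
  rintro (h | ⟨θ, hθ, h₁, -⟩)
  · exact .inl h
  · exact .inr ⟨θ, hθ, h₁, fun _ => .inl (MTL.isPure_of_mem_subfs hψ hθ)⟩

theorem of_some {r : ℝ≥0} : SpawnedBy ψ (some r) t → SpawnedBy ψ v t := by
  rintro (h | ⟨θ, hθ, h₁, h₂⟩)
  · exact .inl h
  · exact .inr ⟨θ, hθ, h₁, fun h => (h₂ h).resolve_right (Option.some_ne_none r) |> .inl⟩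

theorem of_mem_atoms_barP {X : TF (MLoc A)} (hX : ∀ v t, t ∈ X.atoms v → SpawnedBy ψ v t)
    (ht : t ∈ (barP ψ X).atoms v) : SpawnedBy ψ v t := by
  unfold barP at ht
  split at ht
  · exact (hX none t ht).of_isPure ‹_›
  · exact hX v t ht

theorem of_mem_atoms_rhoP {X : TF (MLoc A)} (hX : ∀ v t, t ∈ X.atoms v → SpawnedBy ψ v t)
    (ht : t ∈ (rhoP ψ X).atoms v) : SpawnedBy ψ v t := by
  unfold rhoP at ht
  split at ht
  · exact (hX none t ht).of_isPure ‹_›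
  · exact (hX (some 0) t ht).of_some

end SpawnedBy

variable [DecidableEq A]

theorem spawnedBy_of_mem_atoms_dform (a : A) (ψ : MTL A) :
    ∀ v t, t ∈ (dform ψ a).atoms v → SpawnedBy ψ v t := by
  induction ψ with
  | atom b | natom b =>
    intro v t ht
    simp only [dform] at ht
    split_ifs at ht <;> simp [TF.atoms] at ht
  | conj φ ψ ihφ ihψ | disj φ ψ ihφ ihψ =>
    intro v t ht
    rcases ht with ht | ht
    · exact (SpawnedBy.of_mem_atoms_barP ihφ ht).mono (by simp [MTL.subfs, MTL.mem_subfs_self])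
    · exact (SpawnedBy.of_mem_atoms_barP ihψ ht).mono (by simp [MTL.subfs, MTL.mem_subfs_self])
  | next I ψ =>
    rintro v t rfl
    exact .inl ⟨I, ψ, MTL.mem_subfs_self _, rfl⟩
  | untl I φ ψ ihφ ihψ =>
    rintro v t ((ht | ht) | (ht | rfl))
    · exact (SpawnedBy.of_mem_atoms_rhoP ihψ ht).mono (by simp [MTL.subfs, MTL.mem_subfs_self])
    · exact ht.elim
    · exact (SpawnedBy.of_mem_atoms_rhoP ihφ ht).mono (by simp [MTL.subfs, MTL.mem_subfs_self])
    · exact .inr ⟨_, MTL.mem_subfs_self _, rfl, .inr⟩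

theorem spawnedBy_of_mem_atoms_delta {φ₀ : MTL A} {q : MLoc A} {a : A} {X : TF (MLoc A)}
    (hX : mlocDelta φ₀ q a = some X) {v : Option ℝ≥0} {t : MLoc A × Option ℝ≥0}
    (ht : t ∈ X.atoms v) : SpawnedBy (locForm φ₀ q) v t := by
  cases q with
  | start =>
    cases hX
    exact SpawnedBy.of_mem_atoms_rhoP (spawnedBy_of_mem_atoms_dform a φ₀) ht
  | form ψ =>
    cases hX
    exact spawnedBy_of_mem_atoms_dform a ψ v t ht
  | nextr I ψ =>
    cases hX
    rcases ht with ht | ht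
    · exact ht.elim
    · exact (SpawnedBy.of_mem_atoms_rhoP (spawnedBy_of_mem_atoms_dform a ψ) ht).mono
        (List.mem_cons_of_mem _ (MTL.mem_subfs_self ψ))

end Successors

section Invariant

open Finset

variable {A : Type*}

def MLoc.IsNext : MLoc A → Prop
  | .nextr _ _ => True
  | _ => False

def GoodState (φ₀ : MTL A) (s : MLoc A × Option ℝ≥0) : Prop :=
  locForm φ₀ s.1 ∈ φ₀.subfs ∧ (s.2 = none → (locForm φ₀ s.1).isPure)

def ReachInv (φ₀ : MTL A) (γ : Config (MLoc A)) : Prop :=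
  (∀ s ∈ γ, GoodState φ₀ s) ∧ (∃ z, ∀ s ∈ γ, s.1.IsNext → s.2 = some z) ∧
    activeWeight (locWeight φ₀) γ ≤ max 1 φ₀.rhoWeight

theorem one_le_locWeight (φ₀ : MTL A) {q : MLoc A} (hq : ¬ q.IsNext) : 1 ≤ locWeight φ₀ q := by
  match q with
  | .start => exact le_max_left ..
  | .form (.untl ..) => exact Nat.le_add_right ..
  | .form (.atom _) | .form (.natom _) | .form (.conj ..) | .form (.disj ..) | .form (.next ..) =>
    exact le_max_left ..
  | .nextr .. => exact (hq trivial).elim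

theorem locForm_inj_of_isNext (φ₀ : MTL A) {q q' : MLoc A} (hq : q.IsNext) (hq' : q'.IsNext)
    (h : locForm φ₀ q = locForm φ₀ q') : q = q' := by
  match q, q' with
  | .nextr .., .nextr .. =>
    obtain ⟨rfl, rfl⟩ := MTL.next.inj h
    rfl

theorem GoodState.of_spawnedBy {φ₀ : MTL A} {s t : MLoc A × Option ℝ≥0} (hs : GoodState φ₀ s)
    (ht : SpawnedBy (locForm φ₀ s.1) s.2 t) : GoodState φ₀ t ∧ (t.1.IsNext → t.2 = some 0) := by
  rcases ht with ⟨I, θ, hθ, rfl⟩ | ⟨θ, hθ, ht₁, ht₂⟩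
  · exact ⟨⟨MTL.subfs_trans hθ hs.1, nofun⟩, fun _ => rfl⟩
  · refine ⟨⟨?_, fun hnone => ?_⟩, fun hnext => ?_⟩
    · rw [ht₁]
      exact MTL.subfs_trans hθ hs.1
    · rw [ht₁]
      exact (ht₂ hnone).elim id fun hs₂ => MTL.isPure_of_mem_subfs (hs.2 hs₂) hθ
    · rw [ht₁] at hnext
      exact hnext.elim

theorem reachInv_init (φ₀ : MTL A) : ReachInv φ₀ {(.start, some 0)} := by
  refine ⟨?_, ⟨0, ?_⟩, ?_⟩
  · simp only [mem_singleton, forall_eq]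
    exact ⟨φ₀.mem_subfs_self, nofun⟩
  · simp [MLoc.IsNext]
  · simp only [activeWeight, stateWeight, sum_singleton, Option.isSome_some, if_true]
    rfl

theorem ReachInv.delay {φ₀ : MTL A} {γ : Config (MLoc A)} (h : ReachInv φ₀ γ) (d : ℝ≥0) :
    ReachInv φ₀ (γ.delay d) := by
  obtain ⟨hgood, ⟨z, hz⟩, hw⟩ := h
  refine ⟨?_, ⟨z + d, ?_⟩, (activeWeight_delay _ γ d).trans_le hw⟩
  · simp only [Config.delay, mem_image, forall_exists_index, and_imp]
    rintro _ s hs rfl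
    exact ⟨(hgood s hs).1, fun hnone => (hgood s hs).2 (Option.map_eq_none_iff.1 hnone)⟩
  · simp only [Config.delay, mem_image, forall_exists_index, and_imp]
    rintro _ s hs rfl hnext
    rw [hz s hs hnext]
    rfl

theorem ReachInv.width_le {φ₀ : MTL A} {γ : Config (MLoc A)} (h : ReachInv φ₀ γ) :
    γ.width ≤ max 1 φ₀.rhoWeight + φ₀.subfs.length := by
  obtain ⟨hgood, ⟨z, hz⟩, hw⟩ := h
  have hnext : #(γ.filter (·.1.IsNext)) ≤ φ₀.subfs.length := by
    refine (card_le_card_of_injOn (fun s => locForm φ₀ s.1) (fun s hs => ?_)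
      (fun s hs s' hs' hss' => ?_)).trans φ₀.subfs.toFinset_card_le
    · exact List.mem_toFinset.2 (hgood s (mem_filter.1 hs).1).1
    · obtain ⟨hsγ, hs⟩ := mem_filter.1 hs
      obtain ⟨hsγ', hs'⟩ := mem_filter.1 hs'
      exact Prod.ext (locForm_inj_of_isNext φ₀ hs hs' hss')
        ((hz s hsγ hs).trans (hz s' hsγ' hs').symm)
  have hrest : #(γ.filter fun s => s.2 ≠ none ∧ ¬ s.1.IsNext) ≤ max 1 φ₀.rhoWeight := by
    refine (card_le_activeWeight (filter_subset _ γ) fun s hs => ?_).trans hw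
    obtain ⟨-, hactive, hs⟩ := mem_filter.1 hs
    simpa [stateWeight, Option.isSome_iff_ne_none.2 hactive] using one_le_locWeight φ₀ hs
  calc γ.width ≤ #(γ.filter (·.1.IsNext) ∪ γ.filter fun s => s.2 ≠ none ∧ ¬ s.1.IsNext) := by
        refine card_le_card fun s hs => ?_
        simp only [mem_union, mem_filter] at hs ⊢
        tauto
    _ ≤ _ := (card_union_le _ _).trans (by omega)

variable [DecidableEq A]

theorem GoodState.weightBound_delta_le {φ₀ : MTL A} (hos : φ₀.oneSided)
    {s : MLoc A × Option ℝ≥0} (hs : GoodState φ₀ s) {a : A} {X : TF (MLoc A)}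
    (hX : mlocDelta φ₀ s.1 a = some X) :
    X.weightBound (locWeight φ₀) s.2.isSome ≤ stateWeight (locWeight φ₀) s := by
  match s with
  | (_, none) => exact (weightBound_delta_false_of_isPure (hs.2 rfl) hX).le
  | (_, some _) => exact weightBound_delta_true_le hos hs.1 hX

theorem ReachInv.dStep {φ₀ : MTL A} (hos : φ₀.oneSided) {γ γ' : Config (MLoc A)} {a : A}
    {χ : MLoc A × Option ℝ≥0 → TF (MLoc A)} (h : ReachInv φ₀ γ)
    (hstep : (ataOf φ₀).DStep γ a χ γ') : ReachInv φ₀ γ' := by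
  obtain ⟨hgood, -, hw⟩ := h
  have hsucc : ∀ t ∈ γ', GoodState φ₀ t ∧ (t.1.IsNext → t.2 = some 0) := by
    intro t ht
    obtain ⟨s, hs, X, hX, htX⟩ := hstep.exists_atoms_of_mem ht
    exact (hgood s hs).of_spawnedBy (spawnedBy_of_mem_atoms_delta hX htX)
  refine ⟨fun t ht => (hsucc t ht).1, ⟨0, fun t ht => (hsucc t ht).2⟩, ?_⟩
  exact (hstep.activeWeight_le _ fun s hs X hX =>
    (hgood s hs).weightBound_delta_le hos hX).trans hw

end Invariant

theorem statement2_general {A : Type*} [DecidableEq A] (φ : MTL A)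
    (hos : φ.oneSided) :
    ∃ k : ℕ, (ataOf φ).WidthBounded k := by
  refine ⟨max 1 φ.rhoWeight + φ.subfs.length, fun γ hreach => ReachInv.width_le ?_⟩
  induction hreach with
  | refl => exact reachInv_init φ
  | delay d _ ih => exact ih.delay d
  | step a χ _ hstep ih => exact ih.dStep hos hstep

/-- For every one-sided MTL formula `φ` there is a bound
`k_φ` such that every configuration reachable from the initial configuration of
`A'_φ` contains at most `k_φ` active states. -/
theorem statement2 {A : Type*} [Fintype A] [DecidableEq A] (φ : MTL A)
    (hos : φ.oneSided) :
    ∃ k : ℕ, (ataOf φ).WidthBounded k :=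
  statement2_general φ hos

end ATAPaper
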